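/- If P = [[Z, B], [Bᵀ, X]] is symmetric positive semidefinite with blocks as above, then for all z ∈ ℝ^p and x ∈ ℝ^n, [z; x]ᵀ P [z; x] ≥ λ_min(X − Bᵀ Z⁻ B) · ‖x‖₂², where Z⁻ is the Moore–Penrose pseudoinverse of Z. -/

import Mathlib

/-!
Since `P` is positive semidefinite, `Z u = 0` forces `(u, 0)ᵀ P (u, 0) = 0`, hence `P (u, 0) = 0`
and `Bᵀ u = 0`. So the kernel of `Z` lies in that of `Bᵀ`, and as `1 - Z Z⁻` is the orthogonal
projection onto the kernel of `Z`, the matrix `C = Z⁻ B` solves `Z C = B`. Completing the square,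
`[z; x]ᵀ P [z; x] = (z + C x)ᵀ Z (z + C x) + xᵀ (X - Bᵀ Z⁻ B) x`, where the first term is
nonnegative and the Schur complement `X - Bᵀ Z⁻ B` is symmetric, so its quadratic form is at least
its smallest eigenvalue times `‖x‖²`. The pseudoinverse of a symmetric `Z` exists because `Z` is
orthogonally diagonalizable.
-/

open Matrix

-- Moore–Penrose pseudoinverse via its four characterizing properties.
open Classical in
noncomputable def moorePenrose {p : ℕ} (Z : Matrix (Fin p) (Fin p) ℝ) :
    Matrix (Fin p) (Fin p) ℝ :=
  if h : ∃ W : Matrix (Fin p) (Fin p) ℝ,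
      Z * W * Z = Z ∧ W * Z * W = W ∧ (Z * W)ᵀ = Z * W ∧ (W * Z)ᵀ = W * Z
  then h.choose else 0

open scoped ComplexOrder MatrixOrder

def IsPenroseInverse {R : Type*} [Mul R] [Star R] (a b : R) : Prop :=
  a * b * a = a ∧ b * a * b = b ∧ star (a * b) = a * b ∧ star (b * a) = b * a

theorem IsPenroseInverse.map {R S F : Type*} [Mul R] [Star R] [Mul S] [Star S] [FunLike F R S]
    [MulHomClass F R S] [StarHomClass F R S] (f : F) {a b : R} (h : IsPenroseInverse a b) :
    IsPenroseInverse (f a) (f b) := by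
  obtain ⟨h₁, h₂, h₃, h₄⟩ := h
  refine ⟨?_, ?_, ?_, ?_⟩ <;> simp only [← map_mul, ← map_star, h₁, h₂, h₃, h₄]

theorem IsPenroseInverse.mul_mul_eq_self_of_ker_le {m n R : Type*} [Fintype m] [DecidableEq m]
    [CommRing R] [StarRing R] {Z W : Matrix m m R} {B : Matrix m n R} (hZ : Z.IsHermitian)
    (hW : IsPenroseInverse Z W) (hker : ∀ u, Z *ᵥ u = 0 → Bᴴ *ᵥ u = 0) : Z * W * B = B := by
  set Q := 1 - Z * W with hQdef
  have hQ : Qᴴ = Q := by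
    rw [conjTranspose_sub, conjTranspose_one, ← star_eq_conjTranspose, hW.2.2.1]
  have hQZ : Q * Z = 0 := by rw [sub_mul, one_mul, hW.1, sub_self]
  have hZQ : Z * Q = 0 := by
    rw [← hZ.eq, ← hQ, ← conjTranspose_mul, hQZ, conjTranspose_zero]
  have hBQ : Bᴴ * Q = 0 := ext_iff_mulVec.2 fun v ↦ by
    rw [← mulVec_mulVec, hker _ (by rw [mulVec_mulVec, hZQ, zero_mulVec]), zero_mulVec]
  have hQB : Q * B = 0 := by
    rw [← hQ, ← conjTranspose_conjTranspose B, ← conjTranspose_mul, hBQ, conjTranspose_zero]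
  rwa [hQdef, Matrix.sub_mul, Matrix.one_mul, sub_eq_zero, eq_comm] at hQB

namespace Matrix

variable {m n : Type*} [Fintype m]

-- Since `0⁻¹ = 0`, `d⁻¹` inverts exactly the nonzero entries of `d`.
theorem isPenroseInverse_diagonal {K : Type*} [Field K] [StarRing K] [DecidableEq m]
    (d : m → K) : IsPenroseInverse (diagonal d) (diagonal d⁻¹) := by
  refine ⟨?_, ?_, ?_, ?_⟩ <;>
    simp only [diagonal_mul_diagonal, star_eq_conjTranspose, diagonal_conjTranspose] <;>
    congr 1 <;> funext i <;> by_cases h : d i = 0 <;> simp [h]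

theorem IsHermitian.exists_isPenroseInverse {𝕜 : Type*} [RCLike 𝕜] [DecidableEq m]
    {A : Matrix m m 𝕜} (hA : A.IsHermitian) : ∃ W, IsPenroseInverse A W := by
  rw [hA.spectral_theorem]
  exact ⟨_, (isPenroseInverse_diagonal _).map _⟩

theorem IsHermitian.sub_conjTranspose_mul_of_fromBlocks {R : Type*} [CommRing R] [StarRing R]
    {A : Matrix m m R} {B C : Matrix m n R} {D : Matrix n n R}
    (hP : (Matrix.fromBlocks A B Bᴴ D).IsHermitian) (hC : A * C = B) :
    (D - Bᴴ * C).IsHermitian := by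
  obtain ⟨hA, -, -, hD⟩ := isHermitian_fromBlocks_iff.1 hP
  subst hC
  rw [conjTranspose_mul, hA.eq]
  exact hD.sub (isHermitian_conjTranspose_mul_mul C hA)

variable [Fintype n]

theorem schur_complement_eq₁₁_of_mul_eq {R : Type*} [CommRing R] [StarRing R]
    {A : Matrix m m R} {B C : Matrix m n R} (D : Matrix n n R) (hA : A.IsHermitian)
    (hC : A * C = B) (x : m → R) (y : n → R) :
    star (x ⊕ᵥ y) ᵥ* fromBlocks A B Bᴴ D ⬝ᵥ (x ⊕ᵥ y) =
      star (x + C *ᵥ y) ᵥ* A ⬝ᵥ (x + C *ᵥ y) + star y ᵥ* (D - Bᴴ * C) ⬝ᵥ y := by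
  subst hC
  simp [Function.star_sumElim, vecMul_fromBlocks, add_vecMul,
    dotProduct_mulVec, vecMul_sub, Matrix.mul_assoc, hA.eq, star_mulVec]
  abel

theorem PosSemidef.conjTranspose_mulVec_eq_zero_of_fromBlocks {𝕜 : Type*} [RCLike 𝕜]
    {Z : Matrix m m 𝕜} {B : Matrix m n 𝕜} {X : Matrix n n 𝕜}
    (hP : (fromBlocks Z B Bᴴ X).PosSemidef) {u : m → 𝕜} (hu : Z *ᵥ u = 0) : Bᴴ *ᵥ u = 0 := by
  have h := (hP.dotProduct_mulVec_zero_iff (u ⊕ᵥ 0)).1 <| by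
    simp [fromBlocks_mulVec, hu, dotProduct, Fintype.sum_sum_type]
  exact funext fun i ↦ by simpa [fromBlocks_mulVec] using congrFun h (.inr i)

theorem setOf_mulVec_eq_smul_eq_spectrum [DecidableEq n] {K : Type*} [Field K]
    (A : Matrix n n K) : {μ : K | ∃ v : n → K, v ≠ 0 ∧ A *ᵥ v = μ • v} = spectrum K A := by
  ext μ
  rw [Set.mem_ofPred_eq, ← spectrum_toLin', ← Module.End.hasEigenvalue_iff_mem_spectrum]
  constructor
  · rintro ⟨v, hv, hAv⟩
    exact Module.End.hasEigenvalue_of_hasEigenvector ⟨Module.End.mem_eigenspace_iff.2 hAv, hv⟩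
  · intro h
    obtain ⟨v, hv⟩ := h.exists_hasEigenvector
    exact ⟨v, hv.2, Module.End.mem_eigenspace_iff.1 hv.1⟩

theorem IsHermitian.sInf_spectrum_mul_dotProduct_le [DecidableEq n] {S : Matrix n n ℝ}
    (hS : S.IsHermitian) (x : n → ℝ) : sInf (spectrum ℝ S) * (x ⬝ᵥ x) ≤ x ⬝ᵥ S *ᵥ x := by
  have hle : algebraMap ℝ _ (sInf (spectrum ℝ S)) ≤ S :=
    (algebraMap_le_iff_le_spectrum hS.isSelfAdjoint).2 fun μ hμ ↦
      csInf_le S.finite_real_spectrum.bddBelow hμ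
  simpa [sub_mulVec, Algebra.algebraMap_eq_smul_one, smul_mulVec, dotProduct_smul] using
    (le_iff.1 hle).dotProduct_mulVec_nonneg x

end Matrix

theorem isPenroseInverse_moorePenrose {p : ℕ} {Z : Matrix (Fin p) (Fin p) ℝ}
    (hZ : Z.IsHermitian) : IsPenroseInverse Z (moorePenrose Z) := by
  have h : ∃ W, Z * W * Z = Z ∧ W * Z * W = W ∧ (Z * W)ᵀ = Z * W ∧ (W * Z)ᵀ = W * Z := by
    simpa [IsPenroseInverse, star_eq_conjTranspose] using hZ.exists_isPenroseInverse
  rw [moorePenrose, dif_pos h]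
  simpa [IsPenroseInverse, star_eq_conjTranspose] using h.choose_spec

theorem psd_block_quadratic_lower_bound {p n : ℕ}
    (Z : Matrix (Fin p) (Fin p) ℝ) (B : Matrix (Fin p) (Fin n) ℝ)
    (X : Matrix (Fin n) (Fin n) ℝ)
    (hP : (fromBlocks Z B Bᵀ X).PosSemidef)
    (lmin : ℝ)
    (hlmin : lmin = sInf {μ : ℝ | ∃ v : Fin n → ℝ,
      v ≠ 0 ∧ (X - Bᵀ * moorePenrose Z * B).mulVec v = μ • v}) :
    ∀ (z : Fin p → ℝ) (x : Fin n → ℝ),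
      Sum.elim z x ⬝ᵥ (fromBlocks Z B Bᵀ X).mulVec (Sum.elim z x) ≥
        lmin * ∑ i, x i ^ 2 := by
  intro z x
  rw [← conjTranspose_eq_transpose_of_trivial B] at hP hlmin ⊢
  set W := moorePenrose Z
  have hZ : Z.PosSemidef := hP.submatrix Sum.inl
  have hC : Z * (W * B) = B := by
    rw [← Matrix.mul_assoc]
    exact (isPenroseInverse_moorePenrose hZ.isHermitian).mul_mul_eq_self_of_ker_le hZ.isHermitian
      fun _ ↦ hP.conjTranspose_mulVec_eq_zero_of_fromBlocks
  have hS := hP.isHermitian.sub_conjTranspose_mul_of_fromBlocks hC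
  have hsquare := schur_complement_eq₁₁_of_mul_eq X hZ.isHermitian hC z x
  simp only [star_trivial, ← dotProduct_mulVec] at hsquare
  rw [Matrix.mul_assoc, setOf_mulVec_eq_smul_eq_spectrum] at hlmin
  calc lmin * ∑ i, x i ^ 2 = sInf (spectrum ℝ (X - Bᴴ * (W * B))) * (x ⬝ᵥ x) := by
        simp [hlmin, dotProduct, sq]
    _ ≤ x ⬝ᵥ (X - Bᴴ * (W * B)) *ᵥ x := hS.sInf_spectrum_mul_dotProduct_le x
    _ ≤ _ := by
      rw [hsquare]
      exact le_add_of_nonneg_left (by simpa using hZ.dotProduct_mulVec_nonneg (z + (W * B) *ᵥ x))
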